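/- In the autonomy-aware clustering setup with squared Euclidean cost and autonomy independent of Y, suppose every cluster mass p_πρ^Y(ℓ) = Σ_i Σ_j ρ(i) π_Y^β(j|i) p(ℓ|j,i) is strictly positive. Then ∇F(Y) = 0 holds if and only if for every ℓ = 1, …, K the representative satisfies the weighted-centroid condition y_ℓ = (Σ_{i=1}^N Σ_{j=1}^K ρ(i) p(ℓ|j,i) π_Y^β(j|i) x_i) / (Σ_{i=1}^N Σ_{j=1}^K ρ(i) p(ℓ|j,i) π_Y^β(j|i)). -/

import Mathlib

/-!
The free energy is a `ρ`-weighted sum of soft-minima `-β⁻¹ log ∑ⱼ exp (-β dⱼ)`, and the gradient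
of a soft-minimum is the Gibbs average `∑ⱼ π(j) ∇dⱼ` of the gradients of the costs. As
`∇_{y_ℓ} d_avg(xᵢ, yⱼ) = 2 p(ℓ|j,i) (y_ℓ - xᵢ)`, the `ℓ`-th block of `∇F(Y)` is
`2 ∑ᵢ ∑ⱼ ρ(i) p(ℓ|j,i) π(j|i) (y_ℓ - xᵢ)`, which vanishes exactly when `y_ℓ` is the weighted
centroid, the total weight being the (nonzero) cluster mass of `ℓ`.
-/

open InnerProductSpace Real Finset

theorem sum_smul_sub_eq_zero_iff {α 𝕜 V : Type*} [Field 𝕜] [AddCommGroup V] [Module 𝕜 V]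
    {s : Finset α} {w : α → 𝕜} (x : α → V) (y : V) (hw : ∑ a ∈ s, w a ≠ 0) :
    ∑ a ∈ s, w a • (y - x a) = 0 ↔ y = (∑ a ∈ s, w a)⁻¹ • ∑ a ∈ s, w a • x a := by
  rw [eq_inv_smul_iff₀ hw, sum_smul, ← sub_eq_zero (a := ∑ a ∈ s, w a • y), ← sum_sub_distrib]
  simp only [smul_sub]

section Gradient

variable {E : Type*} [NormedAddCommGroup E] [InnerProductSpace ℝ E] [CompleteSpace E]

theorem HasGradientAt.const_mul {f : E → ℝ} {g y : E} (c : ℝ) (hf : HasGradientAt f g y) :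
    HasGradientAt (fun z => c * f z) (c • g) y := by
  rw [hasGradientAt_iff_hasFDerivAt, map_smul] at *
  exact hf.const_mul c

theorem HasGradientAt.fun_sum {ι : Type*} {s : Finset ι} {f : ι → E → ℝ} {g : ι → E} {y : E}
    (hf : ∀ i ∈ s, HasGradientAt (f i) (g i) y) :
    HasGradientAt (fun z => ∑ i ∈ s, f i z) (∑ i ∈ s, g i) y := by
  rw [hasGradientAt_iff_hasFDerivAt, map_sum]
  exact HasFDerivAt.fun_sum fun i hi => hasGradientAt_iff_hasFDerivAt.mp (hf i hi)

theorem HasGradientAt.softmin {ι : Type*} [Fintype ι] {β : ℝ} (hβ : β ≠ 0)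
    {D : ι → E → ℝ} {g : ι → E} {y : E} (hD : ∀ j, HasGradientAt (D j) (g j) y) :
    HasGradientAt (fun z => -(1 / β) * log (∑ j, exp (-β * D j z)))
      (∑ j, (exp (-β * D j y) / ∑ l, exp (-β * D l y)) • g j) y := by
  rcases isEmpty_or_nonempty ι with hι | hι
  · simpa using hasGradientAt_const y (-(1 / β) * log 0)
  have hpartition : (∑ l, exp (-β * D l y)) ≠ 0 :=
    (sum_pos (fun l _ => exp_pos _) univ_nonempty).ne'
  have hsum : HasFDerivAt (fun z => ∑ j, exp (-β * D j z))
      (∑ j, exp (-β * D j y) • (-β) • toDual ℝ E (g j)) y :=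
    HasFDerivAt.fun_sum fun j _ =>
      ((hasGradientAt_iff_hasFDerivAt.mp (hD j)).const_mul (-β)).exp
  rw [hasGradientAt_iff_hasFDerivAt]
  refine ((hsum.log hpartition).const_mul (-(1 / β))).congr_fderiv ?_
  simp only [map_sum, map_smul, smul_sum, smul_smul]
  refine sum_congr rfl fun j _ => ?_
  congr 1
  field_simp

theorem hasGradientAt_sum_mul_norm_sub_sq {κ : Type*} [Fintype κ] (w : κ → ℝ) (x : E)
    (Y : PiLp 2 fun _ : κ => E) :
    HasGradientAt (fun Z : PiLp 2 (fun _ : κ => E) => ∑ k, w k * ‖x - Z k‖ ^ 2)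
      (WithLp.toLp 2 fun k => (2 * w k) • (Y k - x)) Y := by
  rw [hasGradientAt_iff_hasFDerivAt]
  have hcoord : ∀ k, HasFDerivAt (fun Z : PiLp 2 (fun _ : κ => E) => x - Z k)
      (-PiLp.proj (𝕜 := ℝ) 2 (fun _ : κ => E) k) Y := fun k =>
    (PiLp.proj (𝕜 := ℝ) 2 (fun _ : κ => E) k).hasFDerivAt.const_sub x
  refine (HasFDerivAt.fun_sum fun k _ => (hcoord k).norm_sq.const_mul (w k)).congr_fderiv ?_
  ext V
  simp only [_root_.sum_apply, smul_apply, ContinuousLinearMap.comp_apply, neg_apply,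
    innerSL_apply_apply, PiLp.proj_apply, toDual_apply_apply, PiLp.inner_apply, inner_neg_right,
    inner_smul_left]
  refine sum_congr rfl fun k _ => ?_
  rw [← neg_sub, inner_neg_left]
  simp only [smul_eq_mul, nsmul_eq_mul, RCLike.conj_to_real]
  ring

end Gradient

theorem stmt_2_general (N K d : ℕ) (β : ℝ) (hβ : 0 < β)
    (x : Fin N → EuclideanSpace ℝ (Fin d)) (ρ : Fin N → ℝ)
    (p : Fin K → Fin K → Fin N → ℝ)
    (davg : (PiLp 2 fun _ : Fin K => EuclideanSpace ℝ (Fin d)) → Fin N → Fin K → ℝ)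
    (hdavg : ∀ Y i j, davg Y i j = ∑ k, p k j i * ‖x i - Y k‖ ^ 2)
    (πpol : (PiLp 2 fun _ : Fin K => EuclideanSpace ℝ (Fin d)) → Fin K → Fin N → ℝ)
    (hπ : ∀ Y j i, πpol Y j i =
      Real.exp (-β * davg Y i j) / ∑ ℓ, Real.exp (-β * davg Y i ℓ))
    (F : (PiLp 2 fun _ : Fin K => EuclideanSpace ℝ (Fin d)) → ℝ)
    (hF : ∀ Y, F Y = -(1 / β) * ∑ i, ρ i * Real.log (∑ j, Real.exp (-β * davg Y i j)))
    (Y : PiLp 2 fun _ : Fin K => EuclideanSpace ℝ (Fin d))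
    (hmass : ∀ ℓ, 0 < ∑ i, ∑ j, ρ i * πpol Y j i * p ℓ j i) :
    gradient F Y = 0 ↔
      ∀ ℓ, Y ℓ = (∑ i, ∑ j, ρ i * p ℓ j i * πpol Y j i)⁻¹ •
        ∑ i, ∑ j, (ρ i * p ℓ j i * πpol Y j i) • x i := by
  have hsoftmin : ∀ i, HasGradientAt (fun Z => -(1 / β) * log (∑ j, exp (-β * davg Z i j)))
      (∑ j, πpol Y j i • WithLp.toLp 2 fun k => (2 * p k j i) • (Y k - x i)) Y := fun i => by
    simp only [hπ, hdavg]
    exact HasGradientAt.softmin hβ.ne' fun j => hasGradientAt_sum_mul_norm_sub_sq _ _ Y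
  have hFsum : F = fun Z => ∑ i, ρ i * (-(1 / β) * log (∑ j, exp (-β * davg Z i j))) :=
    funext fun Z => by rw [hF, mul_sum]; exact sum_congr rfl fun i _ => mul_left_comm _ _ _
  rw [hFsum, (HasGradientAt.fun_sum fun i _ => (hsoftmin i).const_mul (ρ i)).gradient,
    WithLp.ext_iff, funext_iff]
  refine forall_congr' fun ℓ => ?_
  simp only [WithLp.ofLp_sum, WithLp.ofLp_smul, WithLp.ofLp_zero, Finset.sum_apply,
    Pi.smul_apply, Pi.zero_apply]
  set w : Fin N × Fin K → ℝ := fun a => ρ a.1 * p ℓ a.2 a.1 * πpol Y a.2 a.1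
  have hw : ∑ a, w a ≠ 0 := by
    rw [Fintype.sum_prod_type]
    convert (hmass ℓ).ne' using 3
    ring
  have hblock : ∑ i, ρ i • ∑ j, πpol Y j i • (2 * p ℓ j i) • (Y ℓ - x i) =
      (2 : ℝ) • ∑ a, w a • (Y ℓ - x a.1) := by
    simp only [Fintype.sum_prod_type, smul_sum, smul_smul]
    refine sum_congr rfl fun i _ => sum_congr rfl fun j _ => ?_
    congr 1
    ring
  rw [hblock, smul_eq_zero_iff_right two_ne_zero, sum_smul_sub_eq_zero_iff _ _ hw]
  simp only [w, Fintype.sum_prod_type]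

/-- In the autonomy-aware clustering setup with squared Euclidean cost and
autonomy independent of `Y`, if every cluster mass
`p_πρ^Y(ℓ) = ∑ i ∑ j ρ(i) π_Y^β(j|i) p(ℓ|j,i)` is strictly positive, then `∇F(Y) = 0` iff
every representative satisfies the weighted-centroid condition
`y_ℓ = (∑ i ∑ j ρ(i) p(ℓ|j,i) π_Y^β(j|i) x_i) / (∑ i ∑ j ρ(i) p(ℓ|j,i) π_Y^β(j|i))`. -/
theorem stmt_2 (N K d : ℕ) (β : ℝ) (hβ : 0 < β)
    (x : Fin N → EuclideanSpace ℝ (Fin d)) (ρ : Fin N → ℝ)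
    (hρ : ∀ i, 0 ≤ ρ i) (hρ1 : ∑ i, ρ i = 1)
    (p : Fin K → Fin K → Fin N → ℝ)
    (hp : ∀ k j i, 0 ≤ p k j i) (hp1 : ∀ j i, ∑ k, p k j i = 1)
    (davg : (PiLp 2 fun _ : Fin K => EuclideanSpace ℝ (Fin d)) → Fin N → Fin K → ℝ)
    (hdavg : ∀ Y i j, davg Y i j = ∑ k, p k j i * ‖x i - Y k‖ ^ 2)
    (πpol : (PiLp 2 fun _ : Fin K => EuclideanSpace ℝ (Fin d)) → Fin K → Fin N → ℝ)
    (hπ : ∀ Y j i, πpol Y j i =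
      Real.exp (-β * davg Y i j) / ∑ ℓ, Real.exp (-β * davg Y i ℓ))
    (F : (PiLp 2 fun _ : Fin K => EuclideanSpace ℝ (Fin d)) → ℝ)
    (hF : ∀ Y, F Y = -(1 / β) * ∑ i, ρ i * Real.log (∑ j, Real.exp (-β * davg Y i j)))
    (Y : PiLp 2 fun _ : Fin K => EuclideanSpace ℝ (Fin d))
    (hmass : ∀ ℓ, 0 < ∑ i, ∑ j, ρ i * πpol Y j i * p ℓ j i) :
    gradient F Y = 0 ↔
      ∀ ℓ, Y ℓ = (∑ i, ∑ j, ρ i * p ℓ j i * πpol Y j i)⁻¹ •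
        ∑ i, ∑ j, (ρ i * p ℓ j i * πpol Y j i) • x i :=
  stmt_2_general N K d β hβ x ρ p davg hdavg πpol hπ F hF Y hmass
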